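/- Each set S^{kl} = {x : ⊕_{i∈I₁} a_{1i}⊗x_i ≤ b_{1k}⊗x_k, ⊕_{i∈I₂} a_{2i}⊗x_i ≤ b_{2l}⊗x_l} (with b_{1k}, b_{2l} finite, k ∉ I₁, l ∉ I₂) can be written in the form S^{kl} = {x : A^{kl} ⊗ x ≤ x} for an explicit n×n max-plus matrix A^{kl} that equals the identity except possibly in rows k and l; namely, when k ≠ l, row k of A^{kl} is e'_k ⊕ ⊕_{i∈I₁} (a_{1i} - b_{1k})⊗e'_i and row l is e'_l ⊕ ⊕_{i∈I₂} (a_{2i} - b_{2l})⊗e'_i. -/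

import Mathlib

open Finset

/-- The max-plus semiring carrier: ℝ ∪ {-∞}. Addition of the semiring is `⊔` (max),
multiplication is `+` (with `⊥ + x = ⊥`), zero is `⊥`, unit is `0`. -/
abbrev MP := WithBot ℝ

/-- Max-plus matrix-vector product: `(A ⊗ x) i = max_j (A i j + x j)`. -/
def mvMul {n : ℕ} (A : Matrix (Fin n) (Fin n) MP) (x : Fin n → MP) : Fin n → MP :=
  fun i => univ.sup fun j => A i j + x j

/-- Max-plus matrix-matrix product. -/
def mmMul {n : ℕ} (A B : Matrix (Fin n) (Fin n) MP) : Matrix (Fin n) (Fin n) MP :=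
  fun i j => univ.sup fun k => A i k + B k j

/-- Max-plus identity matrix: `0` on the diagonal, `⊥ = -∞` elsewhere. -/
def mpI {n : ℕ} : Matrix (Fin n) (Fin n) MP := fun i j => if i = j then 0 else ⊥

/-- Max-plus matrix powers. -/
def mpPow {n : ℕ} (A : Matrix (Fin n) (Fin n) MP) : ℕ → Matrix (Fin n) (Fin n) MP
  | 0 => mpI
  | m + 1 => mmMul A (mpPow A m)

/-- The `i`-th multiorder relation: `x ≤_i y` iff `x_i ≠ -∞`, `y_i ≠ -∞` and
`x_j - x_i ≤ y_j - y_i` for all `j` (stated multiplicatively to avoid subtraction). -/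
def leI {n : ℕ} (i : Fin n) (x y : Fin n → MP) : Prop :=
  x i ≠ ⊥ ∧ y i ≠ ⊥ ∧ ∀ j, x j + y i ≤ y j + x i

/-- The max-plus cone generated by a finite set `S` of vectors: all max-plus linear
combinations `⊕_{z ∈ S} α_z ⊗ z`. -/
def genBy {n : ℕ} (S : Finset (Fin n → MP)) : Set (Fin n → MP) :=
  {x | ∃ α : (Fin n → MP) → MP, ∀ j, x j = S.sup fun z => α z + z j}

/-- A finite set of vectors is (max-plus) independent if no element is a max-plus
combination of the others. -/
def mpIndep {n : ℕ} (S : Finset (Fin n → MP)) : Prop :=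
  ∀ s ∈ S, s ∉ genBy (S.erase s)

/-
In row `k` the diagonal entry `0` makes column `k` of `(A ⊗ x)_k ≤ x_k` automatic, and since
`k ∉ I₁` the remaining columns say `a_{1i} - b_{1k} + x_i ≤ x_k` for `i ∈ I₁`, which is the first
constraint of `S^{kl}` because `b_{1k}` is finite; likewise for row `l`. Identity rows impose nothing.
-/

theorem WithBot.add_coe_neg_le_iff (b : ℝ) (u v : WithBot ℝ) :
    u + ((-b : ℝ) : WithBot ℝ) ≤ v ↔ u ≤ (b : WithBot ℝ) + v := by
  have hb : ((b : ℝ) : WithBot ℝ) ≠ ⊥ := WithBot.coe_ne_bot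
  rw [← WithBot.add_le_add_iff_right hb, add_assoc, ← WithBot.coe_add, neg_add_cancel,
    WithBot.coe_zero, add_zero, add_comm v]

theorem mvMul_le_iff {n : ℕ} (A : Matrix (Fin n) (Fin n) MP) (x : Fin n → MP) (i : Fin n)
    (y : MP) : mvMul A x i ≤ y ↔ ∀ j, A i j + x j ≤ y := by
  simp [mvMul]

theorem mvMul_mpI {n : ℕ} (x : Fin n → MP) : mvMul mpI x = x := by
  funext i
  refine le_antisymm ((mvMul_le_iff _ _ _ _).2 fun j => ?_) ?_
  · by_cases hij : i = j <;> simp [mpI, hij]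
  · calc x i = mpI i i + x i := by simp [mpI]
      _ ≤ mvMul mpI x i := Finset.le_sup (f := fun j => mpI i j + x j) (mem_univ i)

theorem mvMul_le_self_iff_of_row_eq {n : ℕ} (A : Matrix (Fin n) (Fin n) MP) (x : Fin n → MP)
    (a : Fin n → MP) (I : Finset (Fin n)) (k : Fin n) (b : ℝ) (hk : k ∉ I)
    (hAk : ∀ j, A k j = if j = k then 0 else if j ∈ I then a j + ((-b : ℝ) : MP) else ⊥) :
    mvMul A x k ≤ x k ↔ (I.sup fun i => a i + x i) ≤ ((b : ℝ) : MP) + x k := by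
  rw [mvMul_le_iff, Finset.sup_le_iff]
  constructor
  · intro h i hi
    have hik : i ≠ k := ne_of_mem_of_not_mem hi hk
    simpa only [hAk, if_neg hik, if_pos hi, add_right_comm _ _ (x i),
      WithBot.add_coe_neg_le_iff] using h i
  · intro h j
    rw [hAk]
    split_ifs with hjk hjI
    · simp [hjk]
    · rw [add_right_comm, WithBot.add_coe_neg_le_iff]
      exact h j hjI
    · simp

theorem maxplus_Skl_as_star_system_general {n : ℕ} (a1 a2 : Fin n → MP)
    (I1 I2 : Finset (Fin n)) (k l : Fin n)
    (b1k b2l : ℝ) (hk : k ∉ I1) (hl : l ∉ I2)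
    (A : Matrix (Fin n) (Fin n) MP)
    (hAk : ∀ j, A k j = if j = k then 0 else if j ∈ I1 then a1 j + ((-b1k : ℝ) : MP) else ⊥)
    (hAl : ∀ j, A l j = if j = l then 0 else if j ∈ I2 then a2 j + ((-b2l : ℝ) : MP) else ⊥)
    (hA : ∀ i, i ≠ k → i ≠ l → ∀ j, A i j = mpI i j) :
    {x : Fin n → MP |
        (I1.sup fun i => a1 i + x i) ≤ ((b1k : ℝ) : MP) + x k ∧
        (I2.sup fun i => a2 i + x i) ≤ ((b2l : ℝ) : MP) + x l}
      = {x : Fin n → MP | ∀ i, mvMul A x i ≤ x i} := by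
  ext x
  have row_k := mvMul_le_self_iff_of_row_eq A x a1 I1 k b1k hk hAk
  have row_l := mvMul_le_self_iff_of_row_eq A x a2 I2 l b2l hl hAl
  simp only [Set.mem_ofPred_eq]
  refine ⟨fun ⟨h1, h2⟩ i => ?_, fun h => ⟨row_k.1 (h k), row_l.1 (h l)⟩⟩
  by_cases hik : i = k
  · exact hik ▸ row_k.2 h1
  by_cases hil : i = l
  · exact hil ▸ row_l.2 h2
  have hrow : mvMul A x i = mvMul mpI x i := by
    simp only [mvMul, hA i hik hil]
  rw [hrow, mvMul_mpI]

/-- For `k ≠ l` with `b_{1k}, b_{2l}` finite, `k ∉ I₁`, `l ∉ I₂`, the set `S^{kl}` equals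
`{x : A^{kl} ⊗ x ≤ x}`, where `A^{kl}` is the identity except that row `k` is
`e'_k ⊕ ⊕_{i∈I₁} (a_{1i} - b_{1k}) ⊗ e'_i` and row `l` is
`e'_l ⊕ ⊕_{i∈I₂} (a_{2i} - b_{2l}) ⊗ e'_i`. -/
theorem maxplus_Skl_as_star_system {n : ℕ} (a1 a2 : Fin n → MP)
    (I1 I2 : Finset (Fin n)) (k l : Fin n) (hkl : k ≠ l)
    (b1k b2l : ℝ) (hk : k ∉ I1) (hl : l ∉ I2)
    (A : Matrix (Fin n) (Fin n) MP)
    (hAk : ∀ j, A k j = if j = k then 0 else if j ∈ I1 then a1 j + ((-b1k : ℝ) : MP) else ⊥)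
    (hAl : ∀ j, A l j = if j = l then 0 else if j ∈ I2 then a2 j + ((-b2l : ℝ) : MP) else ⊥)
    (hA : ∀ i, i ≠ k → i ≠ l → ∀ j, A i j = mpI i j) :
    {x : Fin n → MP |
        (I1.sup fun i => a1 i + x i) ≤ ((b1k : ℝ) : MP) + x k ∧
        (I2.sup fun i => a2 i + x i) ≤ ((b2l : ℝ) : MP) + x l}
      = {x : Fin n → MP | ∀ i, mvMul A x i ≤ x i} :=
  maxplus_Skl_as_star_system_general a1 a2 I1 I2 k l b1k b2l hk hl A hAk hAl hA
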